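/- Let (X, Σ, μ) be a finite measure space and E a σ-order continuous Banach lattice. If (f_n) is an increasing, norm bounded sequence of positive Bochner integrable functions X → E such that f_n(w) → f(w) in norm for a.e. w, then f is Bochner integrable and ∫ f_n dμ → ∫ f dμ in norm. -/

import Mathlib

open MeasureTheory Filter Topology

/-- σ-order continuity of the norm. -/
def SigmaOrderCont (G : Type*) [NormedAddCommGroup G] [Lattice G] [HasSolidNorm G]
    [IsOrderedAddMonoid G] : Prop :=
  ∀ x : ℕ → G, Antitone x → IsGLB (Set.range x) 0 →
    Tendsto (fun n => ‖x n‖) atTop (𝓝 0)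

/-! Monotonicity and pointwise convergence give `0 ≤ f n ≤ g` a.e., so the solid norm yields the
domination `‖f n‖ ≤ ‖g‖`; Fatou's lemma and the uniform bound on `∫ ‖f n‖` make `‖g‖` integrable,
and dominated convergence finishes the proof. -/

theorem norm_le_norm_of_nonneg_of_le {α : Type*} [NormedAddCommGroup α] [Lattice α]
    [HasSolidNorm α] [IsOrderedAddMonoid α] {a b : α} (ha : 0 ≤ a) (hab : a ≤ b) :
    ‖a‖ ≤ ‖b‖ :=
  norm_le_norm_of_abs_le_abs <| by rwa [abs_of_nonneg ha, abs_of_nonneg (ha.trans hab)]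

theorem integrable_of_tendsto_of_integral_norm_le {X E : Type*} [MeasurableSpace X]
    {μ : Measure X} [NormedAddCommGroup E] {f : ℕ → X → E} {g : X → E} {M : ℝ}
    (hf : ∀ n, Integrable (f n) μ) (hM : ∀ n, ∫ w, ‖f n w‖ ∂μ ≤ M)
    (hlim : ∀ᵐ w ∂μ, Tendsto (fun n => f n w) atTop (𝓝 (g w))) :
    Integrable g μ := by
  refine ⟨aestronglyMeasurable_of_tendsto_ae atTop (fun n => (hf n).1) hlim, ?_⟩
  have hfatou : ∫⁻ w, ‖g w‖ₑ ∂μ ≤ atTop.liminf fun n => ∫⁻ w, ‖f n w‖ₑ ∂μ :=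
    lintegral_congr_ae (by filter_upwards [hlim] with w hw using hw.enorm.liminf_eq) ▸
      lintegral_liminf_le' fun n => (hf n).1.enorm
  have hbound : ∀ n, ∫⁻ w, ‖f n w‖ₑ ∂μ ≤ ENNReal.ofReal M := fun n =>
    ofReal_integral_norm_eq_lintegral_enorm (hf n) ▸ ENNReal.ofReal_le_ofReal (hM n)
  calc ∫⁻ w, ‖g w‖ₑ ∂μ ≤ ENNReal.ofReal M :=
        hfatou.trans (liminf_le_of_frequently_le' (.of_forall hbound))
    _ < ⊤ := ENNReal.ofReal_lt_top

theorem stmt_15_general {X : Type*} [MeasurableSpace X] (μ : Measure X)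
    {E : Type*} [NormedAddCommGroup E] [Lattice E] [HasSolidNorm E] [IsOrderedAddMonoid E]
    [NormedSpace ℝ E]
    (f : ℕ → X → E) (g : X → E)
    (hf : ∀ n, Integrable (f n) μ)
    (hpos : ∀ n, ∀ᵐ w ∂μ, 0 ≤ f n w)
    (hmono : ∀ᵐ w ∂μ, Monotone fun n => f n w)
    (hbd : ∃ M : ℝ, ∀ n, ∫ w, ‖f n w‖ ∂μ ≤ M)
    (hlim : ∀ᵐ w ∂μ, Tendsto (fun n => f n w) atTop (𝓝 (g w))) :
    Integrable g μ ∧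
    Tendsto (fun n => ∫ w, f n w ∂μ) atTop (𝓝 (∫ w, g w ∂μ)) := by
  obtain ⟨M, hM⟩ := hbd
  have hg : Integrable g μ := integrable_of_tendsto_of_integral_norm_le hf hM hlim
  have hdom : ∀ n, ∀ᵐ w ∂μ, ‖f n w‖ ≤ ‖g w‖ := fun n => by
    filter_upwards [hpos n, hmono, hlim] with w hpos hmono hlim
    exact norm_le_norm_of_nonneg_of_le hpos (hmono.ge_of_tendsto hlim n)
  exact ⟨hg, tendsto_integral_of_dominated_convergence _ (fun n => (hf n).1) hg.norm hdom hlim⟩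

/-- Monotone convergence theorem for Bochner integrals valued in a σ-order
continuous Banach lattice: an increasing, norm bounded sequence of positive Bochner
integrable functions converging pointwise a.e. has a Bochner integrable limit and the
integrals converge in norm. -/
theorem stmt_15 {X : Type*} [MeasurableSpace X] (μ : Measure X) [IsFiniteMeasure μ]
    {E : Type*} [NormedAddCommGroup E] [Lattice E] [HasSolidNorm E] [IsOrderedAddMonoid E]
    [NormedSpace ℝ E] [CompleteSpace E]
    (hE : SigmaOrderCont E)
    (f : ℕ → X → E) (g : X → E)
    (hf : ∀ n, Integrable (f n) μ)
    (hpos : ∀ n, ∀ᵐ w ∂μ, 0 ≤ f n w)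
    (hmono : ∀ᵐ w ∂μ, Monotone fun n => f n w)
    (hbd : ∃ M : ℝ, ∀ n, ∫ w, ‖f n w‖ ∂μ ≤ M)
    (hlim : ∀ᵐ w ∂μ, Tendsto (fun n => f n w) atTop (𝓝 (g w))) :
    Integrable g μ ∧
    Tendsto (fun n => ∫ w, f n w ∂μ) atTop (𝓝 (∫ w, g w ∂μ)) :=
  stmt_15_general μ f g hf hpos hmono hbd hlim
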